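/- Let k ≥ 1, let δ be an integer with 0 < δ < 2^k, and let M, N be integers with 0 ≤ M < N. Then ν₂( C(N·2^k, M·2^k + δ) ) > ν₂( C(N·2^k, M·2^k) ). -/

import Mathlib

/-!
By Legendre's formula, `ν₂(C(m + n, m)) = s(m) + s(n) - s(m + n)` where `s` is the binary digit
sum. Appending `k` binary digits below `a` adds their digit sum, so with `N = M + L + 1` both
binomial coefficients reduce to digit sums of `M`, `L`, `N`, `δ` and `2^k - δ`: the first one is
`s(M) + s(L + 1) - s(N)`, the second `s(M) + s(δ) + s(L) + s(2^k - δ) - s(N)`. Since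
`s(L + 1) ≤ s(L) + 1` while `s(δ), s(2^k - δ) ≥ 1`, the second is strictly larger.
-/

namespace Nat

theorem digits_sum_pos {b n : ℕ} (hn : n ≠ 0) : 0 < (b.digits n).sum :=
  List.sum_pos_iff_exists_pos_nat.mpr
    ⟨_, List.getLast_mem (digits_ne_nil_iff_ne_zero.mpr hn),
      pos_of_ne_zero (getLast_digit_ne_zero b hn)⟩

theorem digits_sum_mul_pow_add {b k a δ : ℕ} (hb : 1 < b) (hδ : δ < b ^ k) :
    (b.digits (a * b ^ k + δ)).sum = (b.digits a).sum + (b.digits δ).sum := by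
  rcases eq_zero_or_pos a with rfl | ha
  · simp
  have hlen : (b.digits δ).length ≤ k := (digits_length_le_iff hb δ).mpr hδ
  have hsplit :
      a * b ^ k + δ = δ + b ^ ((b.digits δ).length + (k - (b.digits δ).length)) * a := by
    rw [Nat.add_sub_cancel' hlen]; ring
  rw [hsplit, ← digits_append_zeroes_append_digits hb ha]
  simp [add_comm]

theorem digits_sum_mul_pow {b k a : ℕ} (hb : 1 < b) :
    (b.digits (a * b ^ k)).sum = (b.digits a).sum := by
  simpa using digits_sum_mul_pow_add (a := a) hb (pow_pos (zero_lt_of_lt hb) k)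

end Nat

open Nat in
theorem sub_one_mul_padicValNat_add_choose_add_digits_sum {p : ℕ} [Fact p.Prime] (m n : ℕ) :
    (p - 1) * padicValNat p ((m + n).choose m) + (p.digits (m + n)).sum =
      (p.digits m).sum + (p.digits n).sum := by
  have hfact : padicValNat p (m + n)! =
      padicValNat p ((m + n).choose m) + padicValNat p n ! + padicValNat p m ! := by
    conv_lhs => rw [add_comm m n, ← add_choose_mul_factorial_mul_factorial n m, add_comm n m]
    have hC : (m + n).choose m ≠ 0 := (choose_pos (le_add_right m n)).ne'
    rw [padicValNat.mul (mul_ne_zero hC (factorial_ne_zero n)) (factorial_ne_zero m),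
      padicValNat.mul hC (factorial_ne_zero n)]
  have hmn := sub_one_mul_padicValNat_factorial (p := p) (m + n)
  have hm := sub_one_mul_padicValNat_factorial (p := p) m
  have hn := sub_one_mul_padicValNat_factorial (p := p) n
  rw [hfact, mul_add, mul_add] at hmn
  have := Nat.digit_sum_le p m
  have := Nat.digit_sum_le p n
  have := Nat.digit_sum_le p (m + n)
  omega

theorem Nat.digits_sum_add_le {p : ℕ} [Fact p.Prime] (m n : ℕ) :
    (p.digits (m + n)).sum ≤ (p.digits m).sum + (p.digits n).sum := by
  have := sub_one_mul_padicValNat_add_choose_add_digits_sum (p := p) m n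
  omega

theorem stmt2_general (k : ℕ) (δ : ℕ) (hδ1 : 0 < δ) (hδ2 : δ < 2 ^ k)
    (M N : ℕ) (hMN : M < N) :
    padicValNat 2 (Nat.choose (N * 2 ^ k) (M * 2 ^ k)) <
      padicValNat 2 (Nat.choose (N * 2 ^ k) (M * 2 ^ k + δ)) := by
  obtain ⟨L, rfl⟩ : ∃ L, N = M + L + 1 := ⟨N - M - 1, by omega⟩
  have hsplit₁ : (M + L + 1) * 2 ^ k = M * 2 ^ k + (L + 1) * 2 ^ k := by ring
  have hsplit₂ : (M + L + 1) * 2 ^ k = (M * 2 ^ k + δ) + (L * 2 ^ k + (2 ^ k - δ)) := by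
    zify [hδ2.le]; ring
  have hν₁ := sub_one_mul_padicValNat_add_choose_add_digits_sum (p := 2) (M * 2 ^ k)
    ((L + 1) * 2 ^ k)
  have hν₂ := sub_one_mul_padicValNat_add_choose_add_digits_sum (p := 2) (M * 2 ^ k + δ)
    (L * 2 ^ k + (2 ^ k - δ))
  rw [← hsplit₁, Nat.digits_sum_mul_pow one_lt_two, Nat.digits_sum_mul_pow one_lt_two,
    Nat.digits_sum_mul_pow one_lt_two] at hν₁
  rw [← hsplit₂, Nat.digits_sum_mul_pow one_lt_two, Nat.digits_sum_mul_pow_add one_lt_two hδ2,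
    Nat.digits_sum_mul_pow_add one_lt_two (by omega)] at hν₂
  have hL : (Nat.digits 2 (L + 1)).sum ≤ (Nat.digits 2 L).sum + 1 := by
    simpa using Nat.digits_sum_add_le (p := 2) L 1
  have hsδ : 0 < (Nat.digits 2 δ).sum := Nat.digits_sum_pos hδ1.ne'
  have hsδ' : 0 < (Nat.digits 2 (2 ^ k - δ)).sum := Nat.digits_sum_pos (by omega)
  omega

/-- For `k ≥ 1`, `0 < δ < 2^k`, and `0 ≤ M < N`, one has
`ν₂(C(N·2^k, M·2^k + δ)) > ν₂(C(N·2^k, M·2^k))`. -/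
theorem stmt2 (k : ℕ) (hk : 1 ≤ k) (δ : ℕ) (hδ1 : 0 < δ) (hδ2 : δ < 2 ^ k)
    (M N : ℕ) (hMN : M < N) :
    padicValNat 2 (Nat.choose (N * 2 ^ k) (M * 2 ^ k)) <
      padicValNat 2 (Nat.choose (N * 2 ^ k) (M * 2 ^ k + δ)) :=
  stmt2_general k δ hδ1 hδ2 M N hMN
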